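/- Let K ∈ 𝔹^{n_u×n_y}, G ∈ 𝔹^{n_y×n_u}, n = min(n_u, n_y), and define Z_0 = K, Z_{m+1} = Z_m + Z_m G Z_m. Then Z_{⌈log₂ n⌉} = Z_{⌈log₂ n⌉ + 1}, i.e., the sequence converges in at most ⌈log₂ n⌉ steps. -/

import Mathlib

/-!
The step `Z ↦ Z + Z G Z` doubles the range of exponents: `Z_m` is the Boolean sum of the terms
`K (G K)^s` over `s < 2^m`. A true entry of `K (G K)^s` is witnessed by an alternating walk through
`s + 1` row indices and `s + 1` column indices. Once `s ≥ min(n_u, n_y)`, one of these index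
sequences repeats, and cutting out the cycle gives a shorter walk; so the terms with `s ≥ n` add
nothing, and `Z_m` is constant as soon as `n ≤ 2^m`.
-/

/-- Boolean (OR/AND semiring) matrix multiplication. -/
noncomputable def bmul {a b c : ℕ} (X : Matrix (Fin a) (Fin b) Bool) (Y : Matrix (Fin b) (Fin c) Bool) :
    Matrix (Fin a) (Fin c) Bool :=
  fun i k => Finset.univ.sup fun j => X i j && Y j k

/-- Entrywise Boolean (OR) addition of matrices. -/
def badd {a b : ℕ} (X Y : Matrix (Fin a) (Fin b) Bool) : Matrix (Fin a) (Fin b) Bool :=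
  fun i j => X i j || Y i j

/-- The sequence Z_0 = K, Z_{m+1} = Z_m + Z_m G Z_m. -/
noncomputable def Zseq {nu ny : ℕ} (K : Matrix (Fin nu) (Fin ny) Bool) (G : Matrix (Fin ny) (Fin nu) Bool) :
    ℕ → Matrix (Fin nu) (Fin ny) Bool
  | 0 => K
  | m + 1 => badd (Zseq K G m) (bmul (bmul (Zseq K G m) G) (Zseq K G m))

/-- kterm K G s = K (G K)^s in the Boolean semiring. -/
noncomputable def kterm {nu ny : ℕ} (K : Matrix (Fin nu) (Fin ny) Bool) (G : Matrix (Fin ny) (Fin nu) Bool) :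
    ℕ → Matrix (Fin nu) (Fin ny) Bool
  | 0 => K
  | s + 1 => bmul (kterm K G s) (bmul G K)

/-- Boolean (OR) sum of the matrices f 0, ..., f (N-1). -/
noncomputable def bsum {a b : ℕ} (N : ℕ) (f : ℕ → Matrix (Fin a) (Fin b) Bool) :
    Matrix (Fin a) (Fin b) Bool :=
  fun i j => (Finset.range N).sup fun s => f s i j

/-- Number of nonzero (true) entries. -/
def ncount {a b : ℕ} (Z : Matrix (Fin a) (Fin b) Bool) : ℕ :=
  ∑ i : Fin a, ∑ j : Fin b, if Z i j then 1 else 0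

open scoped Matrix

lemma Finset.sup_eq_true_iff {ι : Type*} (s : Finset ι) (f : ι → Bool) :
    s.sup f = true ↔ ∃ i ∈ s, f i = true := by
  have h : ∀ b : Bool, b = true ↔ false < b := by decide
  simp only [h, Finset.lt_sup_iff]

lemma bmul_eq_true_iff {a b c : ℕ} (X : Matrix (Fin a) (Fin b) Bool)
    (Y : Matrix (Fin b) (Fin c) Bool) (i : Fin a) (k : Fin c) :
    bmul X Y i k = true ↔ ∃ j, X i j = true ∧ Y j k = true := by
  simp [bmul, Finset.sup_eq_true_iff]

lemma bsum_eq_true_iff {a b : ℕ} (N : ℕ) (f : ℕ → Matrix (Fin a) (Fin b) Bool)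
    (i : Fin a) (j : Fin b) :
    bsum N f i j = true ↔ ∃ s < N, f s i j = true := by
  simp [bsum, Finset.sup_eq_true_iff]

lemma bmul_assoc {a b c d : ℕ} (X : Matrix (Fin a) (Fin b) Bool) (Y : Matrix (Fin b) (Fin c) Bool)
    (Z : Matrix (Fin c) (Fin d) Bool) : bmul (bmul X Y) Z = bmul X (bmul Y Z) := by
  ext i l
  rw [Bool.eq_iff_iff]
  simp only [bmul_eq_true_iff]
  aesop

lemma bmul_transpose {a b c : ℕ} (X : Matrix (Fin a) (Fin b) Bool)
    (Y : Matrix (Fin b) (Fin c) Bool) :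
    (bmul X Y)ᵀ = bmul Yᵀ Xᵀ := by
  ext i k
  simp only [Matrix.transpose_apply, bmul, Bool.and_comm]

lemma Nat.exists_lt_two_mul_iff {P : ℕ → Prop} {N : ℕ} (hN : 1 ≤ N) :
    (∃ r < 2 * N, P r) ↔ (∃ r < N, P r) ∨ ∃ s < N, ∃ t < N, P (s + t + 1) := by
  constructor
  · rintro ⟨r, hr, h⟩
    by_cases hrN : r < N
    · exact .inl ⟨r, hrN, h⟩
    · refine .inr ⟨N - 1, by omega, r - N, by omega, ?_⟩
      rwa [show N - 1 + (r - N) + 1 = r by omega]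
  · rintro (⟨r, hr, h⟩ | ⟨s, hs, t, ht, h⟩)
    exacts [⟨r, by omega, h⟩, ⟨s + t + 1, by omega, h⟩]

section ReachIn

variable {α : Type*} {R : α → α → Prop}

variable (R) in
def ReachIn (s : ℕ) (a b : α) : Prop :=
  ∃ f : ℕ → α, f 0 = a ∧ f s = b ∧ ∀ k < s, R (f k) (f (k + 1))

lemma reachIn_zero_iff {a b : α} : ReachIn R 0 a b ↔ a = b :=
  ⟨fun ⟨_, h0, hs, _⟩ => h0 ▸ hs, fun h => ⟨fun _ => a, rfl, h, by simp⟩⟩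

lemma reachIn_succ_iff {s : ℕ} {a c : α} :
    ReachIn R (s + 1) a c ↔ ∃ b, ReachIn R s a b ∧ R b c := by
  constructor
  · rintro ⟨f, h0, hs, hf⟩
    exact ⟨f s, ⟨f, h0, rfl, fun k hk => hf k (by omega)⟩, hs ▸ hf s (by omega)⟩
  · rintro ⟨b, ⟨f, h0, hs, hf⟩, hbc⟩
    refine ⟨fun k => if k ≤ s then f k else c, by simp [h0], by simp, fun k hk => ?_⟩
    rcases Nat.lt_or_eq_of_le (Nat.le_of_lt_succ hk) with hk | rfl
    · simpa [hk.le, Nat.succ_le_of_lt hk] using hf k hk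
    · simpa [hs] using hbc

lemma ReachIn.exists_lt_of_card_le [Fintype α] {s : ℕ} {a b : α} (h : ReachIn R s a b)
    (hs : Fintype.card α ≤ s) : ∃ t < s, ReachIn R t a b := by
  obtain ⟨f, rfl, rfl, hf⟩ := h
  obtain ⟨k, l, hkl, hls, heq⟩ : ∃ k l, k < l ∧ l ≤ s ∧ f k = f l := by
    obtain ⟨x, y, hxy, hfxy⟩ := Fintype.exists_ne_map_eq_of_card_lt (fun t : Fin (s + 1) => f t)
      (by simpa using Nat.lt_succ_of_le hs)
    rcases lt_or_gt_of_ne (Fin.val_ne_of_ne hxy) with hlt | hlt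
    exacts [⟨x, y, hlt, by omega, hfxy⟩, ⟨y, x, hlt, by omega, hfxy.symm⟩]
  -- `f` with the cycle between the repeated vertices `f k = f l` cut out
  refine ⟨s - (l - k), by omega, fun t => if t ≤ k then f t else f (t + (l - k)), by simp,
    ?_, ?_⟩
  · by_cases hlk : s - (l - k) ≤ k
    · obtain rfl : l = s := by omega
      simp [show l - (l - k) = k by omega, heq]
    · simp only [hlk, if_false, show s - (l - k) + (l - k) = s by omega]
  · intro t ht
    rcases lt_trichotomy t k with htk | rfl | htk
    · simpa [htk.le, Nat.succ_le_of_lt htk] using hf t (by omega)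
    · simpa [heq, show t + 1 + (l - t) = l + 1 by omega] using hf l (by omega)
    · simpa [show ¬ t ≤ k by omega, show ¬ t + 1 ≤ k by omega,
        show t + 1 + (l - k) = t + (l - k) + 1 by omega] using hf (t + (l - k)) (by omega)

lemma ReachIn.exists_lt_card [Fintype α] {s : ℕ} {a b : α} (h : ReachIn R s a b) :
    ∃ t < Fintype.card α, ReachIn R t a b := by
  induction s using Nat.strong_induction_on with
  | _ s ih =>
    by_cases hs : s < Fintype.card α
    · exact ⟨s, hs, h⟩
    · obtain ⟨t, hts, ht⟩ := h.exists_lt_of_card_le (not_lt.1 hs)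
      exact ih t hts ht

end ReachIn

section kterm

variable {nu ny : ℕ} (K : Matrix (Fin nu) (Fin ny) Bool) (G : Matrix (Fin ny) (Fin nu) Bool)

lemma bmul_bmul_kterm_kterm (s t : ℕ) :
    bmul (bmul (kterm K G s) G) (kterm K G t) = kterm K G (s + t + 1) := by
  induction t with
  | zero => exact bmul_assoc _ _ _
  | succ t ih => rw [kterm, ← bmul_assoc, ih]; rfl

lemma kterm_succ' (s : ℕ) : kterm K G (s + 1) = bmul (bmul K G) (kterm K G s) := by
  have h := bmul_bmul_kterm_kterm K G 0 s
  rw [zero_add] at h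
  exact h.symm

lemma kterm_transpose (s : ℕ) : kterm Kᵀ Gᵀ s = (kterm K G s)ᵀ := by
  induction s with
  | zero => rfl
  | succ s ih => rw [kterm, ih, kterm_succ', bmul_transpose, bmul_transpose]

lemma kterm_eq_true_iff_reachIn (s : ℕ) (i : Fin nu) (j : Fin ny) :
    kterm K G s i j = true ↔
      ∃ u, ReachIn (fun a b => bmul K G a b = true) s i u ∧ K u j = true := by
  induction s generalizing j with
  | zero => simp [kterm, reachIn_zero_iff]
  | succ s ih =>
    simp only [kterm, reachIn_succ_iff, bmul_eq_true_iff, ih]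
    aesop

lemma kterm_exists_lt_left {s : ℕ} {i : Fin nu} {j : Fin ny} (h : kterm K G s i j = true) :
    ∃ t < nu, kterm K G t i j = true := by
  obtain ⟨u, hiu, huj⟩ := (kterm_eq_true_iff_reachIn K G s i j).1 h
  obtain ⟨t, ht, hiu'⟩ := hiu.exists_lt_card
  exact ⟨t, by simpa using ht, (kterm_eq_true_iff_reachIn K G t i j).2 ⟨u, hiu', huj⟩⟩

lemma kterm_exists_lt_min {s : ℕ} {i : Fin nu} {j : Fin ny} (h : kterm K G s i j = true) :
    ∃ t < min nu ny, kterm K G t i j = true := by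
  rcases le_total nu ny with hle | hle
  · simpa [min_eq_left hle] using kterm_exists_lt_left K G h
  · have hT : kterm Kᵀ Gᵀ s j i = true := by rwa [kterm_transpose]
    obtain ⟨t, ht, h'⟩ := kterm_exists_lt_left Kᵀ Gᵀ hT
    exact ⟨t, by omega, by rwa [kterm_transpose] at h'⟩

lemma bsum_kterm_eq_of_min_le {N : ℕ} (hN : min nu ny ≤ N) :
    bsum N (kterm K G) = bsum (min nu ny) (kterm K G) := by
  ext i j
  rw [Bool.eq_iff_iff, bsum_eq_true_iff, bsum_eq_true_iff]
  constructor
  · rintro ⟨s, -, h⟩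
    exact kterm_exists_lt_min K G h
  · rintro ⟨s, hs, h⟩
    exact ⟨s, by omega, h⟩

end kterm

lemma Zseq_eq_bsum_kterm {nu ny : ℕ} (K : Matrix (Fin nu) (Fin ny) Bool)
    (G : Matrix (Fin ny) (Fin nu) Bool) (m : ℕ) : Zseq K G m = bsum (2 ^ m) (kterm K G) := by
  induction m with
  | zero => ext i j; simp [Zseq, bsum, kterm]
  | succ m ih =>
    ext i j
    rw [Bool.eq_iff_iff, bsum_eq_true_iff, pow_succ', Nat.exists_lt_two_mul_iff Nat.one_le_two_pow]
    simp only [Zseq, badd, Bool.or_eq_true, ih, ← bmul_bmul_kterm_kterm, bsum_eq_true_iff,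
      bmul_eq_true_iff]
    aesop

theorem stmt8_general {nu ny : ℕ} (K : Matrix (Fin nu) (Fin ny) Bool)
    (G : Matrix (Fin ny) (Fin nu) Bool) :
    Zseq K G (Nat.clog 2 (min nu ny)) = Zseq K G (Nat.clog 2 (min nu ny) + 1) := by
  have h : min nu ny ≤ 2 ^ Nat.clog 2 (min nu ny) := Nat.le_pow_clog one_lt_two _
  rw [Zseq_eq_bsum_kterm, Zseq_eq_bsum_kterm, bsum_kterm_eq_of_min_le K G h,
    bsum_kterm_eq_of_min_le K G (h.trans (Nat.pow_le_pow_right two_pos (Nat.le_succ _)))]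

theorem stmt8 {nu ny : ℕ} (K : Matrix (Fin nu) (Fin ny) Bool)
    (G : Matrix (Fin ny) (Fin nu) Bool) (hn : 1 ≤ min nu ny) :
    Zseq K G (Nat.clog 2 (min nu ny)) = Zseq K G (Nat.clog 2 (min nu ny) + 1) :=
  stmt8_general K G
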